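/- arXiv:2402.07185 — 2 statements merged into one kernel-verified Lean document; each statement's English description precedes it below -/
import Mathlib

section
/- Let γ ∈ (0,1), σ_D > 0, A > 1, and ξ > 0. Suppose h₁ : [0,δ₁] → ℝ and h₂ : [0,δ₂] → ℝ, with 0 < δ₁ ≤ δ₂ < 1, are both C¹ solutions of the Cauchy problem h(0) = γ and h'(y) = a₀(y) + (a₁(y)/(1−y))·h(y) + (a₂(h,y)/(1−y))·h(y)² on the interiors of their intervals. Then h₁(y) = h₂(y) for all y ∈ [0, δ₁]; in other words, the boundary value problem has a unique local solution. -/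
open Set Real

/-- `a₀(y) = γ(1+γ)/y`. -/
noncomputable def a0 (γ y : ℝ) : ℝ := γ * (1 + γ) / y

/-- `a₁(y) = ((2γ+1)y − (1+γ))/y`. -/
noncomputable def a1 (γ y : ℝ) : ℝ := ((2 * γ + 1) * y - (1 + γ)) / y

/-- `a₂(h,y) = (ξ/σ_D²)·exp(∫₀^y (h(q)−1)/(1−q) dq) − A`. -/
noncomputable def a2 (ξ σD A : ℝ) (h : ℝ → ℝ) (y : ℝ) : ℝ :=
  ξ / σD ^ 2 * Real.exp (∫ q in (0:ℝ)..y, (h q - 1) / (1 - q)) - A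

/-!
The difference `w = h₁ - h₂` vanishes at `0`. In `w w'` the `a₀` terms cancel and the singular
part `-(1+γ)/y` of `a₁` enters with a favourable sign, so it can be dropped; every other
coefficient is bounded on `[0, δ₁]`. Since `exp` is Lipschitz on bounded sets, the path-dependent
coefficient `a₂` changes by at most a constant times `J(y) = ∫₀^y |w|`. Hence the energy
`w² + J²` satisfies a linear differential inequality, and Grönwall forces it to vanish.
-/

open MeasureTheory Topology

theorem abs_exp_sub_exp_le_of_le {a b c : ℝ} (ha : a ≤ c) (hb : b ≤ c) :
    |exp a - exp b| ≤ exp c * |a - b| :=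
  Convex.norm_image_sub_le_of_norm_deriv_le (𝕜 := ℝ) (f := exp) (fun _ _ => differentiableAt_exp)
    (fun x hx => by simpa [abs_of_pos (exp_pos x)] using exp_le_exp.2 hx) (convex_Iic c) hb ha

theorem abs_integral_div_one_sub_le {f : ℝ → ℝ} {a x d : ℝ} (hax : a ≤ x) (hxd : x ≤ d)
    (hd : d < 1) (hf : IntervalIntegrable f volume a x) :
    |∫ q in a..x, f q / (1 - q)| ≤ (1 - d)⁻¹ * ∫ q in a..x, |f q| := by
  rw [← Real.norm_eq_abs, ← intervalIntegral.integral_const_mul]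
  refine intervalIntegral.norm_integral_le_of_norm_le hax (.of_forall fun q hq => ?_)
    (hf.abs.const_mul _)
  have hq1 : 0 < 1 - q := by linarith [hq.2]
  rw [norm_div, Real.norm_eq_abs, Real.norm_eq_abs, abs_of_pos hq1, div_eq_inv_mul]
  gcongr
  linarith [hq.2]

theorem hasDerivWithinAt_integral_Ici_of_continuousOn {f : ℝ → ℝ} {a b x : ℝ}
    (hf : ContinuousOn f (Icc a b)) (hx : x ∈ Ico a b) :
    HasDerivWithinAt (fun u => ∫ t in a..u, f t) (f x) (Ici x) x := by
  have hmem : Icc a b ∈ 𝓝[>] x :=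
    nhdsWithin_mono x Ioi_subset_Ici_self (Icc_mem_nhdsGE_of_mem hx)
  refine intervalIntegral.integral_hasDerivWithinAt_right ?_
    ⟨Icc a b, hmem, hf.aestronglyMeasurable measurableSet_Icc⟩
    ((hf x (Ico_subset_Icc_self hx)).mono_of_mem_nhdsWithin hmem)
  exact (hf.mono (Icc_subset_Icc le_rfl hx.2.le)).intervalIntegrable_of_Icc hx.1

theorem eq_zero_of_mul_deriv_le_integral_abs {w w' : ℝ → ℝ} {a b K : ℝ} (hab : a ≤ b)
    (hw : ∀ x ∈ Icc a b, HasDerivWithinAt w (w' x) (Icc a b) x) (ha : w a = 0)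
    (bound : ∀ x ∈ Ioo a b, w x * w' x ≤ K * |w x| * (|w x| + ∫ t in a..x, |w t|)) :
    ∀ x ∈ Icc a b, w x = 0 := by
  set J : ℝ → ℝ := fun x => ∫ t in a..x, |w t|
  have hwc : ContinuousOn w (Icc a b) := fun x hx => (hw x hx).continuousWithinAt
  have hJc : ContinuousOn J (Icc a b) := by
    have hint : IntegrableOn (fun t => |w t|) (uIcc a b) := by
      rw [uIcc_of_le hab]
      exact hwc.abs.integrableOn_Icc
    simpa [uIcc_of_le hab] using intervalIntegral.continuousOn_primitive_interval hint
  have hΦ : ∀ x ∈ Ico a b, HasDerivWithinAt (fun y => w y ^ 2 + J y ^ 2)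
      (2 * w x * w' x + 2 * J x * |w x|) (Ici x) x := by
    intro x hx
    have hw' := ((hw x (Ico_subset_Icc_self hx)).mono_of_mem_nhdsWithin
      (Icc_mem_nhdsGE_of_mem hx)).fun_pow 2
    have hJ' := (hasDerivWithinAt_integral_Ici_of_continuousOn hwc.abs hx).fun_pow 2
    exact (hw'.add hJ').congr_deriv (by push_cast; ring)
  have hΦ_bound : ∀ x ∈ Ico a b,
      2 * w x * w' x + 2 * J x * |w x| ≤ (3 * |K| + 1) * (w x ^ 2 + J x ^ 2) + 0 := by
    intro x hx
    rcases hx.1.eq_or_lt with rfl | hax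
    · simp [J, ha]
    have hJx : 0 ≤ J x := intervalIntegral.integral_nonneg hax.le fun _ _ => abs_nonneg _
    have hwx : w x * w' x ≤ |K| * |w x| * (|w x| + J x) :=
      (bound x ⟨hax, hx.2⟩).trans (by gcongr; exact le_abs_self K)
    nlinarith [sq_abs (w x), abs_nonneg (w x), abs_nonneg K, sq_nonneg (|w x| - J x),
      mul_nonneg (abs_nonneg K) (sq_nonneg (|w x| - J x))]
  intro x hx
  have hΦx := le_gronwallBound_of_liminf_deriv_right_le (δ := 0) ((hwc.pow 2).add (hJc.pow 2))
    (fun y hy _ hr => (hΦ y hy).liminf_right_slope_le hr) (by simp [J, ha]) hΦ_bound x hx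
  rw [gronwallBound_ε0_δ0, Pi.add_apply, Pi.pow_apply, Pi.pow_apply] at hΦx
  nlinarith [sq_nonneg (w x), sq_nonneg (J x)]

theorem sub_mul_riccati_sub_le {a b B p₁ p₂ s₁ s₂ J L M R x d : ℝ} (hxd : x ≤ d) (hd : d < 1)
    (ha : a ≤ B) (hB : 0 ≤ B) (hL : 0 ≤ L) (hJ : 0 ≤ J) (hs₁ : |s₁| ≤ M) (hs₂ : |s₂| ≤ M)
    (hp : |p₁ - p₂| ≤ L * J) (hp₂ : |p₂| ≤ R) :
    (s₁ - s₂) * ((b + a / (1 - x) * s₁ + p₁ / (1 - x) * s₁ ^ 2)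
        - (b + a / (1 - x) * s₂ + p₂ / (1 - x) * s₂ ^ 2))
      ≤ (1 - d)⁻¹ * (B + L * M ^ 2 + 2 * M * R) * |s₁ - s₂| * (|s₁ - s₂| + J) := by
  have hx : 0 < 1 - x := by linarith
  have hM : 0 ≤ M := (abs_nonneg _).trans hs₁
  have hR : 0 ≤ R := (abs_nonneg _).trans hp₂
  have hsq : |s₁ ^ 2 - s₂ ^ 2| ≤ 2 * M * |s₁ - s₂| := by
    rw [sq_sub_sq, abs_mul]
    exact mul_le_mul_of_nonneg_right (by linarith [abs_add_le s₁ s₂]) (abs_nonneg _)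
  have hD : |p₁ * s₁ ^ 2 - p₂ * s₂ ^ 2| ≤ L * J * M ^ 2 + R * (2 * M * |s₁ - s₂|) := by
    rw [show p₁ * s₁ ^ 2 - p₂ * s₂ ^ 2 = (p₁ - p₂) * s₁ ^ 2 + p₂ * (s₁ ^ 2 - s₂ ^ 2) by ring]
    refine (abs_add_le _ _).trans ?_
    rw [abs_mul, abs_mul, abs_pow]
    gcongr
  have hkey : (s₁ - s₂) * (a * (s₁ - s₂) + (p₁ * s₁ ^ 2 - p₂ * s₂ ^ 2))
      ≤ (B + L * M ^ 2 + 2 * M * R) * |s₁ - s₂| * (|s₁ - s₂| + J) := by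
    have hw := abs_nonneg (s₁ - s₂)
    have h₁ : a * (s₁ - s₂) ^ 2 ≤ B * |s₁ - s₂| ^ 2 := by
      rw [sq_abs]; exact mul_le_mul_of_nonneg_right ha (sq_nonneg _)
    have h₂ : (s₁ - s₂) * (p₁ * s₁ ^ 2 - p₂ * s₂ ^ 2) ≤ |s₁ - s₂| * |p₁ * s₁ ^ 2 - p₂ * s₂ ^ 2| :=
      (le_abs_self _).trans (abs_mul _ _).le
    nlinarith [mul_le_mul_of_nonneg_left hD hw, mul_nonneg (mul_nonneg hL (sq_nonneg M)) hw,
      mul_nonneg (mul_nonneg hL (sq_nonneg M)) (mul_nonneg hw hw), mul_nonneg hB (mul_nonneg hw hJ),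
      mul_nonneg (mul_nonneg (mul_nonneg hM hR) hw) hJ]
  calc _ = (1 - x)⁻¹ * ((s₁ - s₂) * (a * (s₁ - s₂) + (p₁ * s₁ ^ 2 - p₂ * s₂ ^ 2))) := by
        field_simp
        ring
    _ ≤ (1 - x)⁻¹ * ((B + L * M ^ 2 + 2 * M * R) * |s₁ - s₂| * (|s₁ - s₂| + J)) := by
        gcongr
    _ ≤ (1 - d)⁻¹ * ((B + L * M ^ 2 + 2 * M * R) * |s₁ - s₂| * (|s₁ - s₂| + J)) := by
        gcongr
    _ = _ := by ring

theorem a1_le {γ y : ℝ} (hγ : -1 ≤ γ) (hy : 0 < y) : a1 γ y ≤ 2 * γ + 1 := by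
  rw [a1, div_le_iff₀ hy]
  linarith

theorem intervalIntegrable_sub_one_div_one_sub {h : ℝ → ℝ} {x : ℝ} (hx : 0 ≤ x) (hx1 : x < 1)
    (hh : ContinuousOn h (Icc 0 x)) :
    IntervalIntegrable (fun q => (h q - 1) / (1 - q)) volume 0 x :=
  ((hh.sub continuousOn_const).div (continuousOn_const.sub continuousOn_id)
    fun _ hq => (sub_pos.2 (hq.2.trans_lt hx1)).ne').intervalIntegrable_of_Icc hx

theorem exists_integral_sub_one_div_one_sub_le {h : ℝ → ℝ} {d : ℝ} (hd0 : 0 ≤ d) (hd : d < 1)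
    (hh : ContinuousOn h (Icc 0 d)) :
    ∃ E, ∀ x ∈ Icc 0 d, ∫ q in (0:ℝ)..x, (h q - 1) / (1 - q) ≤ E := by
  have hint := intervalIntegrable_sub_one_div_one_sub hd0 hd hh
  have hcont := intervalIntegral.continuousOn_primitive_interval' hint left_mem_uIcc
  rw [uIcc_of_le hd0] at hcont
  obtain ⟨E, hE⟩ := isCompact_Icc.bddAbove_image hcont
  exact ⟨E, fun x hx => hE (mem_image_of_mem _ hx)⟩

theorem abs_a2_le {ξ σD A E x : ℝ} {h : ℝ → ℝ}
    (hE : ∫ q in (0:ℝ)..x, (h q - 1) / (1 - q) ≤ E) :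
    |a2 ξ σD A h x| ≤ |ξ / σD ^ 2| * exp E + |A| := by
  refine (abs_sub _ _).trans ?_
  rw [abs_mul, abs_of_pos (exp_pos _)]
  gcongr

theorem abs_a2_sub_a2_le {ξ σD A E x d : ℝ} {h₁ h₂ : ℝ → ℝ} (hx : 0 ≤ x) (hxd : x ≤ d)
    (hd : d < 1) (hh₁ : ContinuousOn h₁ (Icc 0 x)) (hh₂ : ContinuousOn h₂ (Icc 0 x))
    (hE₁ : ∫ q in (0:ℝ)..x, (h₁ q - 1) / (1 - q) ≤ E)
    (hE₂ : ∫ q in (0:ℝ)..x, (h₂ q - 1) / (1 - q) ≤ E) :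
    |a2 ξ σD A h₁ x - a2 ξ σD A h₂ x|
      ≤ |ξ / σD ^ 2| * exp E * (1 - d)⁻¹ * ∫ q in (0:ℝ)..x, |h₁ q - h₂ q| := by
  have hx1 : x < 1 := hxd.trans_lt hd
  have hdiff : (∫ q in (0:ℝ)..x, (h₁ q - 1) / (1 - q)) - ∫ q in (0:ℝ)..x, (h₂ q - 1) / (1 - q)
      = ∫ q in (0:ℝ)..x, (h₁ q - h₂ q) / (1 - q) := by
    rw [← intervalIntegral.integral_sub (intervalIntegrable_sub_one_div_one_sub hx hx1 hh₁)
      (intervalIntegrable_sub_one_div_one_sub hx hx1 hh₂)]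
    congr 1 with q
    ring
  have hw : IntervalIntegrable (fun q => h₁ q - h₂ q) volume 0 x :=
    (hh₁.sub hh₂).intervalIntegrable_of_Icc hx
  calc |a2 ξ σD A h₁ x - a2 ξ σD A h₂ x|
      = |ξ / σD ^ 2| * |exp (∫ q in (0:ℝ)..x, (h₁ q - 1) / (1 - q))
          - exp (∫ q in (0:ℝ)..x, (h₂ q - 1) / (1 - q))| := by
        rw [a2, a2, sub_sub_sub_cancel_right, ← mul_sub, abs_mul]
    _ ≤ |ξ / σD ^ 2| * (exp E * |∫ q in (0:ℝ)..x, (h₁ q - h₂ q) / (1 - q)|) := by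
        rw [← hdiff]
        gcongr
        exact abs_exp_sub_exp_le_of_le hE₁ hE₂
    _ ≤ |ξ / σD ^ 2| * (exp E * ((1 - d)⁻¹ * ∫ q in (0:ℝ)..x, |h₁ q - h₂ q|)) := by
        gcongr
        exact abs_integral_div_one_sub_le hx hxd hd hw
    _ = _ := by ring

theorem stmt10_general (γ σD A ξ δ1 δ2 : ℝ) (hγ : γ ∈ Ioo (0:ℝ) 1)
    (hδ1 : 0 < δ1) (hδ12 : δ1 ≤ δ2) (hδ2 : δ2 < 1)
    (h1 h1' h2 h2' : ℝ → ℝ)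
    (hd1 : ∀ y ∈ Icc (0:ℝ) δ1, HasDerivWithinAt h1 (h1' y) (Icc (0:ℝ) δ1) y)
    (h10 : h1 0 = γ)
    (hode1 : ∀ y ∈ Ioo (0:ℝ) δ1,
      h1' y = a0 γ y + a1 γ y / (1 - y) * h1 y + a2 ξ σD A h1 y / (1 - y) * h1 y ^ 2)
    (hd2 : ∀ y ∈ Icc (0:ℝ) δ2, HasDerivWithinAt h2 (h2' y) (Icc (0:ℝ) δ2) y)
    (h20 : h2 0 = γ)
    (hode2 : ∀ y ∈ Ioo (0:ℝ) δ2,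
      h2' y = a0 γ y + a1 γ y / (1 - y) * h2 y + a2 ξ σD A h2 y / (1 - y) * h2 y ^ 2) :
    ∀ y ∈ Icc (0:ℝ) δ1, h1 y = h2 y := by
  have hδ1' : δ1 < 1 := hδ12.trans_lt hδ2
  have hsub : Icc (0:ℝ) δ1 ⊆ Icc 0 δ2 := Icc_subset_Icc_right hδ12
  have hd2' : ∀ y ∈ Icc (0:ℝ) δ1, HasDerivWithinAt h2 (h2' y) (Icc 0 δ1) y :=
    fun y hy => (hd2 y (hsub hy)).mono hsub
  have hc1 : ContinuousOn h1 (Icc 0 δ1) := fun y hy => (hd1 y hy).continuousWithinAt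
  have hc2 : ContinuousOn h2 (Icc 0 δ1) := fun y hy => (hd2' y hy).continuousWithinAt
  obtain ⟨M1, hM1⟩ := isCompact_Icc.exists_bound_of_continuousOn hc1
  obtain ⟨M2, hM2⟩ := isCompact_Icc.exists_bound_of_continuousOn hc2
  obtain ⟨E1, hE1⟩ := exists_integral_sub_one_div_one_sub_le hδ1.le hδ1' hc1
  obtain ⟨E2, hE2⟩ := exists_integral_sub_one_div_one_sub_le hδ1.le hδ1' hc2
  set M := max M1 M2
  set E := max E1 E2
  set L := |ξ / σD ^ 2| * exp E * (1 - δ1)⁻¹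
  set R := |ξ / σD ^ 2| * exp E + |A|
  have hL : 0 ≤ L := by have := sub_pos.2 hδ1'; positivity
  intro y hy
  refine sub_eq_zero.1 (eq_zero_of_mul_deriv_le_integral_abs (w := fun x => h1 x - h2 x)
    (K := (1 - δ1)⁻¹ * (2 * γ + 1 + L * M ^ 2 + 2 * M * R)) hδ1.le
    (fun x hx => (hd1 x hx).sub (hd2' x hx)) (by simp [h10, h20]) ?_ y hy)
  intro x hx
  have hxI : x ∈ Icc 0 δ1 := Ioo_subset_Icc_self hx
  have hsubx : Icc 0 x ⊆ Icc 0 δ1 := Icc_subset_Icc_right hx.2.le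
  rw [hode1 x hx, hode2 x ⟨hx.1, hx.2.trans_le hδ12⟩]
  exact sub_mul_riccati_sub_le hx.2.le hδ1' (a1_le (by linarith [hγ.1]) hx.1)
    (by linarith [hγ.1]) hL
    (intervalIntegral.integral_nonneg hx.1.le fun _ _ => abs_nonneg _)
    ((hM1 x hxI).trans (le_max_left _ _)) ((hM2 x hxI).trans (le_max_right _ _))
    (abs_a2_sub_a2_le hx.1.le hx.2.le hδ1' (hc1.mono hsubx) (hc2.mono hsubx)
      ((hE1 x hxI).trans (le_max_left _ _)) ((hE2 x hxI).trans (le_max_right _ _)))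
    (abs_a2_le ((hE2 x hxI).trans (le_max_right _ _)))

/-- **Local uniqueness.** If `h₁` on `[0,δ₁]` and `h₂` on `[0,δ₂]`
(with `0 < δ₁ ≤ δ₂ < 1`) are `C¹` solutions of the same path-dependent Riccati
Cauchy problem `h 0 = γ`, then `h₁ = h₂` on `[0,δ₁]`. -/
theorem stmt10 (γ σD A ξ δ1 δ2 : ℝ) (hγ : γ ∈ Ioo (0:ℝ) 1) (hσ : 0 < σD)
    (hA : 1 < A) (hξ : 0 < ξ)
    (hδ1 : 0 < δ1) (hδ12 : δ1 ≤ δ2) (hδ2 : δ2 < 1)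
    (h1 h1' h2 h2' : ℝ → ℝ)
    (hc1 : ContinuousOn h1' (Icc (0:ℝ) δ1))
    (hd1 : ∀ y ∈ Icc (0:ℝ) δ1, HasDerivWithinAt h1 (h1' y) (Icc (0:ℝ) δ1) y)
    (h10 : h1 0 = γ)
    (hode1 : ∀ y ∈ Ioo (0:ℝ) δ1,
      h1' y = a0 γ y + a1 γ y / (1 - y) * h1 y + a2 ξ σD A h1 y / (1 - y) * h1 y ^ 2)
    (hc2 : ContinuousOn h2' (Icc (0:ℝ) δ2))
    (hd2 : ∀ y ∈ Icc (0:ℝ) δ2, HasDerivWithinAt h2 (h2' y) (Icc (0:ℝ) δ2) y)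
    (h20 : h2 0 = γ)
    (hode2 : ∀ y ∈ Ioo (0:ℝ) δ2,
      h2' y = a0 γ y + a1 γ y / (1 - y) * h2 y + a2 ξ σD A h2 y / (1 - y) * h2 y ^ 2) :
    ∀ y ∈ Icc (0:ℝ) δ1, h1 y = h2 y :=
  stmt10_general γ σD A ξ δ1 δ2 hγ hδ1 hδ12 hδ2 h1 h1' h2 h2' hd1 h10 hode1 hd2 h20 hode2
end

section
/- Let γ ∈ (0,1), σ_D > 0, A > 1, and ξ > 0. Suppose h ∈ C([0,1]) ∩ C¹([0,1)) satisfies h(0) = γ, h(1) ≤ γ, and h'(y) = a₀(y) + (a₁(y)/(1−y))·h(y) + (a₂(h,y)/(1−y))·h(y)² for all y ∈ (0,1). Then h(y) < 1 for all y ∈ [0,1]. -/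
/-!
Let `F := driftAtOne`, which is `(1 - y)` times the right-hand side of the equation at `h = 1`,
and `K := linearCoeff`. Then `(1 - y) h' = F + K (h - 1)`, and
`F' = (1 - γ²)/y² + (a₂ + A) (h - 1)/(1 - y)` is positive wherever `h ≥ 1`.
At the first point `a` where `h` reaches `1` we have `h' a ≥ 0`, hence `F a ≥ 0`. The pair of
conditions `h ≥ 1`, `F ≥ 0` then propagates to the right by continuous induction: `F` increases
strictly just after such a point, and a nonnegative forcing term keeps the solution `h - 1` of
the linear equation nonnegative. Hence `h 1 ≥ 1`, contradicting `h 1 ≤ γ < 1`.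
-/

open Set Real

open Filter Topology

theorem HasDerivAt.nonneg_of_eventually_le_nhdsLT {f : ℝ → ℝ} {f' x : ℝ}
    (hf : HasDerivAt f f' x) (hle : ∀ᶠ y in 𝓝[<] x, f y ≤ f x) : 0 ≤ f' := by
  refine ge_of_tendsto ((hasDerivAt_iff_tendsto_slope.mp hf).mono_left (nhdsLT_le_nhdsNE x)) ?_
  filter_upwards [hle, self_mem_nhdsWithin] with y hy hyx
  rw [slope_comm]
  exact (slope_nonneg_iff_of_le (le_of_lt hyx)).mpr hy

theorem HasDerivAt.eventually_nhdsGT_lt {f : ℝ → ℝ} {f' x : ℝ} (hf : HasDerivAt f f' x)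
    (hf' : 0 < f') : ∀ᶠ y in 𝓝[>] x, f x < f y := by
  filter_upwards [((hasDerivAt_iff_tendsto_slope.mp hf).mono_left (nhdsGT_le_nhdsNE x)).eventually
    (eventually_gt_nhds hf'), self_mem_nhdsWithin] with y hy hxy
  exact (slope_pos_iff_of_le (le_of_lt hxy)).mp hy

theorem ContinuousOn.exists_first_eq {f : ℝ → ℝ} {a x c : ℝ} (hax : a ≤ x)
    (hf : ContinuousOn f (Icc a x)) (ha : f a < c) (hx : c ≤ f x) :
    ∃ t ∈ Ioc a x, f t = c ∧ ∀ y ∈ Ico a t, f y < c := by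
  set S := Icc a x ∩ f ⁻¹' Ici c
  have hS : IsClosed S := hf.preimage_isClosed_of_isClosed isClosed_Icc isClosed_Ici
  have hSbdd : BddBelow S := ⟨a, fun y hy => hy.1.1⟩
  obtain ⟨⟨hat, htx⟩, hct⟩ : sInf S ∈ S := hS.csInf_mem ⟨x, ⟨hax, le_rfl⟩, hx⟩ hSbdd
  obtain ⟨z, hz, hfz⟩ :=
    intermediate_value_Icc hat (hf.mono (Icc_subset_Icc_right htx)) ⟨ha.le, hct⟩
  have hzt : z = sInf S := le_antisymm hz.2 (csInf_le hSbdd ⟨⟨hz.1, hz.2.trans htx⟩, hfz.ge⟩)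
  refine ⟨sInf S, ⟨hat.lt_of_ne ?_, htx⟩, hzt ▸ hfz, fun y hy => not_le.1 fun hcy => ?_⟩
  · intro hta
    exact (hta ▸ hct).not_gt ha
  · exact hy.2.not_ge (csInf_le hSbdd ⟨⟨hy.1, hy.2.le.trans htx⟩, hcy⟩)

theorem nonneg_of_hasDerivAt_add_mul {u f k : ℝ → ℝ} {a b : ℝ} (hab : a ≤ b)
    (hu : ContinuousOn u (Icc a b)) (hk : ContinuousOn k (Icc a b))
    (hu' : ∀ y ∈ Ioo a b, HasDerivAt u (f y + k y * u y) y)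
    (hf : ∀ y ∈ Ioo a b, 0 ≤ f y) (ha : 0 ≤ u a) : 0 ≤ u b := by
  set J : ℝ → ℝ := fun y => ∫ t in a..y, k t
  have hJ : ContinuousOn J (Icc a b) := by
    have := intervalIntegral.continuousOn_primitive_interval (μ := MeasureTheory.volume)
      (a := a) (b := b) (f := k) (by rw [uIcc_of_le hab]; exact hk.integrableOn_Icc)
    rwa [uIcc_of_le hab] at this
  have hJ' : ∀ y ∈ Ioo a b, HasDerivAt J (k y) y := fun y hy =>
    intervalIntegral.integral_hasDerivAt_right
      ((hk.mono (Icc_subset_Icc_right hy.2.le)).intervalIntegrable_of_Icc hy.1.le)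
      ((hk.mono Ioo_subset_Icc_self).stronglyMeasurableAtFilter isOpen_Ioo y hy)
      (hk.continuousAt (Icc_mem_nhds hy.1 hy.2))
  -- the integrating factor `exp (-J)` turns `u' = f + k u` into `(exp (-J) u)' = exp (-J) f`
  have hmono : MonotoneOn (fun y => exp (-J y) * u y) (Icc a b) := by
    refine monotoneOn_of_hasDerivWithinAt_nonneg (f' := fun y => exp (-J y) * f y)
      (convex_Icc a b) (hJ.neg.rexp.mul hu) (fun y hy => ?_) (fun y hy => ?_)
    · rw [interior_Icc] at hy
      refine ((((hJ' y hy).neg.exp).mul (hu' y hy)).congr_deriv ?_).hasDerivWithinAt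
      simp only [Pi.neg_apply]
      ring
    · rw [interior_Icc] at hy
      exact mul_nonneg (exp_pos _).le (hf y hy)
  have := hmono (left_mem_Icc.2 hab) (right_mem_Icc.2 hab) hab
  simp only [J, intervalIntegral.integral_same, neg_zero, exp_zero, one_mul] at this
  exact nonneg_of_mul_nonneg_right (ha.trans this) (exp_pos _)

section Riccati

variable {γ ξ σD A : ℝ} {h : ℝ → ℝ}

noncomputable def driftAtOne (γ ξ σD A : ℝ) (h : ℝ → ℝ) (y : ℝ) : ℝ :=
  (1 - y) * a0 γ y + a1 γ y + a2 ξ σD A h y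

noncomputable def linearCoeff (γ ξ σD A : ℝ) (h : ℝ → ℝ) (y : ℝ) : ℝ :=
  a1 γ y + a2 ξ σD A h y * (1 + h y)

theorem riccati_rhs_eq {y : ℝ} (hy : y ≠ 1) :
    a0 γ y + a1 γ y / (1 - y) * h y + a2 ξ σD A h y / (1 - y) * h y ^ 2 =
      driftAtOne γ ξ σD A h y / (1 - y) + linearCoeff γ ξ σD A h y / (1 - y) * (h y - 1) := by
  have : 1 - y ≠ 0 := sub_ne_zero.2 hy.symm
  simp only [driftAtOne, linearCoeff]
  field_simp
  ring

theorem a2_add_nonneg (hξ : 0 ≤ ξ) (y : ℝ) : 0 ≤ a2 ξ σD A h y + A := by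
  simp only [a2, sub_add_cancel]
  positivity

theorem hasDerivAt_a2 (hh : ContinuousOn h (Ico 0 1)) {y : ℝ} (hy : y ∈ Ioo 0 1) :
    HasDerivAt (a2 ξ σD A h) ((a2 ξ σD A h y + A) * ((h y - 1) / (1 - y))) y := by
  have hψ : ContinuousOn (fun q => (h q - 1) / (1 - q)) (Ico 0 1) :=
    (hh.sub continuousOn_const).div (continuousOn_const.sub continuousOn_id)
      fun q hq => sub_ne_zero.2 hq.2.ne'
  have hint : HasDerivAt (fun y => ∫ q in (0:ℝ)..y, (h q - 1) / (1 - q))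
      ((h y - 1) / (1 - y)) y :=
    intervalIntegral.integral_hasDerivAt_right
      ((hψ.mono (Icc_subset_Ico_right hy.2)).intervalIntegrable_of_Icc hy.1.le)
      ((hψ.mono Ioo_subset_Ico_self).stronglyMeasurableAtFilter isOpen_Ioo y hy)
      (hψ.continuousAt (Ico_mem_nhds hy.1 hy.2))
  refine ((hint.exp.const_mul (ξ / σD ^ 2)).sub_const A).congr_deriv ?_
  rw [a2]
  ring

theorem hasDerivAt_driftAtOne (hh : ContinuousOn h (Ico 0 1)) {y : ℝ} (hy : y ∈ Ioo 0 1) :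
    HasDerivAt (driftAtOne γ ξ σD A h)
      ((1 - γ ^ 2) / y ^ 2 + (a2 ξ σD A h y + A) * ((h y - 1) / (1 - y))) y := by
  have hform : driftAtOne γ ξ σD A h =ᶠ[𝓝 y]
      fun z => 1 + γ - γ ^ 2 - (1 - γ ^ 2) * z⁻¹ + a2 ξ σD A h z := by
    filter_upwards [eventually_ne_nhds hy.1.ne'] with z hz
    simp only [driftAtOne, a0, a1]
    field_simp
    ring
  refine HasDerivAt.congr_of_eventuallyEq ?_ hform
  refine ((((hasDerivAt_inv hy.1.ne').const_mul (1 - γ ^ 2)).const_sub (1 + γ - γ ^ 2)).add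
    (hasDerivAt_a2 hh hy)).congr_deriv ?_
  ring

theorem continuousOn_linearCoeff_div (hh : ContinuousOn h (Ico 0 1)) :
    ContinuousOn (fun y => linearCoeff γ ξ σD A h y / (1 - y)) (Ioo 0 1) := by
  intro y hy
  have ha2 := (hasDerivAt_a2 (ξ := ξ) (σD := σD) (A := A) hh hy).continuousAt
  have hhy := hh.continuousAt (Ico_mem_nhds hy.1 hy.2)
  refine ContinuousAt.continuousWithinAt ?_
  simp only [linearCoeff, a1]
  exact ((((continuousAt_const.mul continuousAt_id).sub continuousAt_const).div continuousAt_id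
    hy.1.ne').add (ha2.mul (continuousAt_const.add hhy))).div
    (continuousAt_const.sub continuousAt_id) (sub_ne_zero.2 hy.2.ne')

theorem driftAtOne_nonneg_of_first_hit
    (hderiv : ∀ y ∈ Ioo (0:ℝ) 1, HasDerivAt h (driftAtOne γ ξ σD A h y / (1 - y) +
      linearCoeff γ ξ σD A h y / (1 - y) * (h y - 1)) y)
    {a : ℝ} (ha : a ∈ Ioo 0 1) (h1 : h a = 1) (hbefore : ∀ y ∈ Ico 0 a, h y < 1) :
    0 ≤ driftAtOne γ ξ σD A h a := by
  have hslope := (hderiv a ha).nonneg_of_eventually_le_nhdsLT <| by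
    filter_upwards [Ioo_mem_nhdsLT ha.1] with y hy
    rw [h1]
    exact (hbefore y ⟨hy.1.le, hy.2⟩).le
  rwa [h1, sub_self, mul_zero, add_zero, le_div_iff₀ (sub_pos.2 ha.2), zero_mul] at hslope

theorem eventually_one_le_and_driftAtOne_nonneg (hγ : γ ∈ Ioo 0 1) (hξ : 0 ≤ ξ)
    (hh : ContinuousOn h (Ico 0 1))
    (hderiv : ∀ y ∈ Ioo (0:ℝ) 1, HasDerivAt h (driftAtOne γ ξ σD A h y / (1 - y) +
      linearCoeff γ ξ σD A h y / (1 - y) * (h y - 1)) y)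
    {x : ℝ} (hx : x ∈ Ioo 0 1) (h1 : 1 ≤ h x) (hF : 0 ≤ driftAtOne γ ξ σD A h x) :
    ∀ᶠ y in 𝓝[>] x, 1 ≤ h y ∧ 0 ≤ driftAtOne γ ξ σD A h y := by
  have hF' : 0 < (1 - γ ^ 2) / x ^ 2 + (a2 ξ σD A h x + A) * ((h x - 1) / (1 - x)) := by
    have : 0 < 1 - γ ^ 2 := by nlinarith [hγ.1, hγ.2]
    have : 0 ≤ (h x - 1) / (1 - x) := div_nonneg (by linarith) (by linarith [hx.2])
    have := a2_add_nonneg (σD := σD) (A := A) (h := h) hξ x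
    have := hx.1
    positivity
  obtain ⟨b, hxb, hb⟩ := mem_nhdsGT_iff_exists_Ioo_subset.1
    (((hasDerivAt_driftAtOne hh hx).eventually_nhdsGT_lt hF').and
      (eventually_nhdsWithin_of_eventually_nhds (eventually_lt_nhds hx.2)))
  filter_upwards [Ioo_mem_nhdsGT hxb] with y hy
  have hsub : Icc x y ⊆ Ioo 0 1 := fun z hz => ⟨hx.1.trans_le hz.1, hz.2.trans_lt (hb hy).2⟩
  have hforcing : ∀ z ∈ Ioo x y, 0 ≤ driftAtOne γ ξ σD A h z / (1 - z) := fun z hz =>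
    div_nonneg (hF.trans (hb ⟨hz.1, hz.2.trans hy.2⟩).1.le)
      (sub_nonneg.2 (hsub (Ioo_subset_Icc_self hz)).2.le)
  have := nonneg_of_hasDerivAt_add_mul (u := fun z => h z - 1) hy.1.le
    ((hh.mono (hsub.trans Ioo_subset_Ico_self)).sub continuousOn_const)
    ((continuousOn_linearCoeff_div hh).mono hsub)
    (fun z hz => (hderiv z (hsub (Ioo_subset_Icc_self hz))).sub_const 1) hforcing
    (sub_nonneg.2 h1)
  exact ⟨sub_nonneg.1 this, hF.trans (hb hy).1.le⟩

theorem one_le_of_driftAtOne_nonneg (hγ : γ ∈ Ioo 0 1) (hξ : 0 ≤ ξ)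
    (hc : ContinuousOn h (Icc 0 1))
    (hderiv : ∀ y ∈ Ioo (0:ℝ) 1, HasDerivAt h (driftAtOne γ ξ σD A h y / (1 - y) +
      linearCoeff γ ξ σD A h y / (1 - y) * (h y - 1)) y)
    {a : ℝ} (ha : a ∈ Ioo 0 1) (h1 : 1 ≤ h a) (hF : 0 ≤ driftAtOne γ ξ σD A h a) :
    1 ≤ h 1 := by
  have hh : ContinuousOn h (Ico 0 1) := hc.mono Ico_subset_Icc_self
  have hbefore_one : ∀ y ∈ Ico a 1, 1 ≤ h y := by
    intro y hy
    have hsub : Icc a y ⊆ Ioo 0 1 := fun z hz => ⟨ha.1.trans_le hz.1, hz.2.trans_lt hy.2⟩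
    have hFc : ContinuousOn (driftAtOne γ ξ σD A h) (Icc a y) := fun z hz =>
      (hasDerivAt_driftAtOne hh (hsub hz)).continuousAt.continuousWithinAt
    have hclosed : IsClosed ({x | 1 ≤ h x ∧ 0 ≤ driftAtOne γ ξ σD A h x} ∩ Icc a y) := by
      rw [inter_comm]
      exact ((hh.mono (hsub.trans Ioo_subset_Ico_self)).prodMk hFc).preimage_isClosed_of_isClosed
        isClosed_Icc (isClosed_Ici.prod isClosed_Ici)
    exact (hclosed.Icc_subset_of_forall_mem_nhdsWithin ⟨h1, hF⟩ (fun x hx =>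
      eventually_one_le_and_driftAtOne_nonneg hγ hξ hh hderiv
        (hsub (Ico_subset_Icc_self hx.2)) hx.1.1 hx.1.2) (right_mem_Icc.2 hy.1)).1
  have hC : IsClosed (Icc 0 1 ∩ h ⁻¹' Ici 1) :=
    hc.preimage_isClosed_of_isClosed isClosed_Icc isClosed_Ici
  have hsub : Icc a 1 ⊆ Icc 0 1 ∩ h ⁻¹' Ici 1 := by
    rw [← closure_Ico ha.2.ne]
    exact hC.closure_subset_iff.2 fun z hz => ⟨⟨ha.1.le.trans hz.1, hz.2.le⟩, hbefore_one z hz⟩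
  exact (hsub ⟨ha.2.le, le_rfl⟩).2

end Riccati

theorem stmt12_general (γ σD A ξ : ℝ) (hγ : γ ∈ Ioo (0:ℝ) 1)
    (hξ : 0 < ξ)
    (h h' : ℝ → ℝ)
    (hc : ContinuousOn h (Icc (0:ℝ) 1))
    (hd : ∀ y ∈ Ico (0:ℝ) 1, HasDerivWithinAt h (h' y) (Ico (0:ℝ) 1) y)
    (h0 : h 0 = γ) (h1 : h 1 ≤ γ)
    (hode : ∀ y ∈ Ioo (0:ℝ) 1,
      h' y = a0 γ y + a1 γ y / (1 - y) * h y + a2 ξ σD A h y / (1 - y) * h y ^ 2) :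
    ∀ y ∈ Icc (0:ℝ) 1, h y < 1 := by
  intro y hy
  by_contra! hy1
  have hderiv : ∀ y ∈ Ioo (0:ℝ) 1, HasDerivAt h (driftAtOne γ ξ σD A h y / (1 - y) +
      linearCoeff γ ξ σD A h y / (1 - y) * (h y - 1)) y := fun y hy => by
    rw [← riccati_rhs_eq hy.2.ne, ← hode y hy]
    exact (hd y (Ioo_subset_Ico_self hy)).hasDerivAt (Ico_mem_nhds hy.1 hy.2)
  obtain ⟨a, ⟨ha0, hay⟩, hha, hbefore⟩ :=
    (hc.mono (Icc_subset_Icc_right hy.2)).exists_first_eq hy.1 (h0 ▸ hγ.2) hy1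
  have ha1 : a < 1 := (hay.trans hy.2).lt_of_ne fun ha1 => by linarith [ha1 ▸ hha, hγ.2]
  have hF := driftAtOne_nonneg_of_first_hit hderiv ⟨ha0, ha1⟩ hha hbefore
  linarith [one_le_of_driftAtOne_nonneg hγ hξ.le hc hderiv ⟨ha0, ha1⟩ hha.ge hF, hγ.2]

/-- Any global solution `h ∈ C([0,1]) ∩ C¹([0,1))` of the
path-dependent Riccati ODE with `h 0 = γ` and `h 1 ≤ γ` satisfies `h < 1`
on all of `[0,1]`. -/
theorem stmt12 (γ σD A ξ : ℝ) (hγ : γ ∈ Ioo (0:ℝ) 1) (hσ : 0 < σD)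
    (hA : 1 < A) (hξ : 0 < ξ)
    (h h' : ℝ → ℝ)
    (hc : ContinuousOn h (Icc (0:ℝ) 1))
    (hc' : ContinuousOn h' (Ico (0:ℝ) 1))
    (hd : ∀ y ∈ Ico (0:ℝ) 1, HasDerivWithinAt h (h' y) (Ico (0:ℝ) 1) y)
    (h0 : h 0 = γ) (h1 : h 1 ≤ γ)
    (hode : ∀ y ∈ Ioo (0:ℝ) 1,
      h' y = a0 γ y + a1 γ y / (1 - y) * h y + a2 ξ σD A h y / (1 - y) * h y ^ 2) :
    ∀ y ∈ Icc (0:ℝ) 1, h y < 1 :=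
  stmt12_general γ σD A ξ hγ hξ h h' hc hd h0 h1 hode
end
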